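/- arXiv:1805.10437 — 2 statements merged into one kernel-verified Lean document; each statement's English description precedes it below -/
import Mathlib

section
/- Let 1/n ≤ θ < 1/3 and 0 < ρ < 10⁻³, and suppose the preconditioner satisfies the operator-norm bound ‖C_f R − C_f(C_fᵀC_f)^{−1/2}‖ ≤ θ(1−3θ)ρ²/(100n⁴). Then every point h* ∈ 𝓗₁ satisfies, for some j ∈ [n] and some choice of sign, ‖C_f R h* ± e_j‖ ≤ 2√ρ. -/
open Matrix MeasureTheory ProbabilityTheory Finset Filter

noncomputable section

/-- The Euclidean (`ℓ²`) norm of a vector in `Fin n → ℝ`. -/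
def enorm2 {n : ℕ} (v : Fin n → ℝ) : ℝ := Real.sqrt (∑ j, v j ^ 2)

/-- The spectral norm (ℓ² operator norm) of a square real matrix. -/
def spec {n : ℕ} (A : Matrix (Fin n) (Fin n) ℝ) : ℝ := ‖Matrix.toEuclideanCLM (𝕜 := ℝ) A‖

/-- The Euclidean gradient of `F : ℝⁿ → ℝ`, given by the partial derivatives. -/
def egrad {n : ℕ} (F : (Fin n → ℝ) → ℝ) (h : Fin n → ℝ) : Fin n → ℝ :=
  fun j => fderiv ℝ F h (Pi.single j 1)

/-- The Euclidean Hessian of `F : ℝⁿ → ℝ`, given by the second partial derivatives. -/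
def ehess {n : ℕ} (F : (Fin n → ℝ) → ℝ) (h : Fin n → ℝ) : Matrix (Fin n) (Fin n) ℝ :=
  Matrix.of fun j k => fderiv ℝ (fun v => fderiv ℝ F v (Pi.single j 1)) h (Pi.single k 1)

/-- Projection `P_{h⊥} = I - h hᵀ` onto the tangent space of the unit sphere at `h`. -/
def Pperp {n : ℕ} (h : Fin n → ℝ) : Matrix (Fin n) (Fin n) ℝ := 1 - Matrix.vecMulVec h h

/-- Riemannian gradient `∇̂F(h) = P_{h⊥} ∇F(h)`. -/
def rgrad {n : ℕ} (F : (Fin n → ℝ) → ℝ) (h : Fin n → ℝ) : Fin n → ℝ :=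
  (Pperp h).mulVec (egrad F h)

/-- Riemannian Hessian `ĤF(h) = P_{h⊥} H_F(h) P_{h⊥} - ⟨∇F(h), h⟩ P_{h⊥}`. -/
def rhess {n : ℕ} (F : (Fin n → ℝ) → ℝ) (h : Fin n → ℝ) : Matrix (Fin n) (Fin n) ℝ :=
  Pperp h * ehess F h * Pperp h - (egrad F h ⬝ᵥ h) • Pperp h

/-- The unit sphere `S^{n-1} ⊆ ℝⁿ`. -/
def usph (n : ℕ) : Set (Fin n → ℝ) := {h | enorm2 h = 1}

/-- The objective `L(h) = -(1/(4N)) ∑_i ‖C_{x_i} U h‖₄⁴`. -/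
def Lobj {n N : ℕ} (x : Fin N → Fin n → ℝ) (U : Matrix (Fin n) (Fin n) ℝ)
    (h : Fin n → ℝ) : ℝ :=
  -(1 / (4 * (N : ℝ))) * ∑ i, ∑ j, ((Matrix.circulant (x i) * U).mulVec h j) ^ 4

/-- Manifold gradient descent iterates. -/
def mgdIter {n : ℕ} (F : (Fin n → ℝ) → ℝ) (γ : ℝ) (h0 : Fin n → ℝ) : ℕ → Fin n → ℝ
  | 0 => h0
  | t + 1 =>
    let w := mgdIter F γ h0 t - γ • rgrad F (mgdIter F γ h0 t)
    (enorm2 w)⁻¹ • w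

/-- `h₀` is a stationary point with `r` nonzero entries: each nonzero entry equals `±1/√r`. -/
def IsStatPoint {n : ℕ} (h₀ : Fin n → ℝ) (r : ℕ) : Prop :=
  (∀ j, h₀ j = 0 ∨ h₀ j = 1 / Real.sqrt r ∨ h₀ j = -(1 / Real.sqrt r)) ∧
  (Finset.univ.filter fun j => h₀ j ≠ 0).card = r

/-- `h` is in the `(ρ,r)`-neighborhood of `h₀`. -/
def nbhd {n : ℕ} (ρ : ℝ) (r : ℕ) (h₀ h : Fin n → ℝ) : Prop :=
  ∀ j, |h j ^ 2 - h₀ j ^ 2| ≤ ρ / r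

def H1'' (n : ℕ) (ρ : ℝ) : Set (Fin n → ℝ) :=
  {h | enorm2 h = 1 ∧ ∃ h₀, IsStatPoint h₀ 1 ∧ nbhd ρ 1 h₀ h}

def H2'' (n : ℕ) (ρ : ℝ) : Set (Fin n → ℝ) :=
  {h | enorm2 h = 1 ∧ ∃ r h₀, 1 < r ∧ IsStatPoint h₀ r ∧ nbhd ρ r h₀ h}

def H3'' (n : ℕ) (ρ : ℝ) : Set (Fin n → ℝ) := usph n \ (H1'' n ρ ∪ H2'' n ρ)

/-- Symmetric positive semidefinite square root (junk value `0` off the PSD cone). -/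
def matSqrt {n : ℕ} (Q : Matrix (Fin n) (Fin n) ℝ) : Matrix (Fin n) (Fin n) ℝ :=
  letI := Classical.dec Q.PosSemidef
  if hQ : Q.PosSemidef then
    (hQ.1.eigenvectorUnitary : Matrix (Fin n) (Fin n) ℝ) *
      Matrix.diagonal (fun i => Real.sqrt (hQ.1.eigenvalues i)) *
      (star hQ.1.eigenvectorUnitary : Matrix (Fin n) (Fin n) ℝ) else 0

/-- Inverse of the symmetric positive definite square root. -/
def matInvSqrt {n : ℕ} (Q : Matrix (Fin n) (Fin n) ℝ) : Matrix (Fin n) (Fin n) ℝ :=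
  (matSqrt Q)⁻¹

/-- The rotation `(C_fᵀ C_f)^{1/2} C_f⁻¹`. -/
def rotMat {n : ℕ} (f : Fin n → ℝ) : Matrix (Fin n) (Fin n) ℝ :=
  matSqrt ((Matrix.circulant f)ᵀ * Matrix.circulant f) * (Matrix.circulant f)⁻¹

def H1set {n : ℕ} (f : Fin n → ℝ) (ρ : ℝ) : Set (Fin n → ℝ) :=
  (fun h => (rotMat f).mulVec h) '' H1'' n ρ

def H2set {n : ℕ} (f : Fin n → ℝ) (ρ : ℝ) : Set (Fin n → ℝ) :=
  (fun h => (rotMat f).mulVec h) '' H2'' n ρ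

def H3set {n : ℕ} (f : Fin n → ℝ) (ρ : ℝ) : Set (Fin n → ℝ) :=
  (fun h => (rotMat f).mulVec h) '' H3'' n ρ

/-- The `n`-point DFT of a real vector. -/
def dftv {n : ℕ} (f : Fin n → ℝ) : Fin n → ℂ :=
  fun j => ∑ k, (f k : ℂ) *
    Complex.exp (-2 * Real.pi * Complex.I * (j : ℕ) * (k : ℕ) / n)

/-- The inverse `n`-point DFT. -/
def idftv {n : ℕ} (v : Fin n → ℂ) : Fin n → ℂ :=
  fun k => (n : ℂ)⁻¹ * ∑ j, v j *
    Complex.exp (2 * Real.pi * Complex.I * (j : ℕ) * (k : ℕ) / n)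

/-- The condition number `κ = max_j |𝓕f_j| / min_k |𝓕f_k|`. -/
def condNum {n : ℕ} (f : Fin n → ℝ) : ℝ :=
  (⨆ j, ‖dftv f j‖) / (⨅ j, ‖dftv f j‖)

/-- The Bernoulli–Rademacher distribution on ℝ with parameter θ. -/
def bernRad (θ : ℝ) : Measure ℝ :=
  ENNReal.ofReal (θ / 2) • Measure.dirac 1 + ENNReal.ofReal (θ / 2) • Measure.dirac (-1) +
    ENNReal.ofReal (1 - θ) • Measure.dirac 0

/-- The matrix `(1/(θnN)) ∑ᵢ C_{yᵢ}ᵀ C_{yᵢ}`. -/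
def Qmat {n N : ℕ} (θ : ℝ) (y : Fin N → Fin n → ℝ) : Matrix (Fin n) (Fin n) ℝ :=
  (1 / (θ * n * N)) • ∑ i, (Matrix.circulant (y i))ᵀ * Matrix.circulant (y i)

/-- The preconditioner `R = ((1/(θnN)) ∑ᵢ C_{yᵢ}ᵀ C_{yᵢ})^{-1/2}`. -/
def Rmat {n N : ℕ} (θ : ℝ) (y : Fin N → Fin n → ℝ) : Matrix (Fin n) (Fin n) ℝ :=
  matInvSqrt (Qmat θ y)



lemma enorm2_eq_norm {n : ℕ} (v : Fin n → ℝ) :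
    enorm2 v = ‖(WithLp.equiv 2 (Fin n → ℝ)).symm v‖ := by
  rw [EuclideanSpace.norm_eq]
  unfold enorm2
  congr 1
  refine Finset.sum_congr rfl fun j _ => ?_
  rw [WithLp.equiv_symm_apply, PiLp.toLp_apply, Real.norm_eq_abs, sq_abs]

lemma enorm2_add_le {n : ℕ} (a b : Fin n → ℝ) :
    enorm2 (a + b) ≤ enorm2 a + enorm2 b := by
  rw [enorm2_eq_norm, enorm2_eq_norm, enorm2_eq_norm, WithLp.equiv_symm_apply, WithLp.toLp_add]
  exact norm_add_le _ _

lemma enorm2_mulVec_le {n : ℕ} (A : Matrix (Fin n) (Fin n) ℝ) (v : Fin n → ℝ) :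
    enorm2 (A.mulVec v) ≤ spec A * enorm2 v := by
  rw [enorm2_eq_norm, enorm2_eq_norm, WithLp.equiv_symm_apply,
    ← Matrix.toEuclideanCLM_toLp]
  exact (Matrix.toEuclideanCLM (𝕜 := ℝ) A).le_opNorm _

lemma enorm2_mulVec_orth {n : ℕ} (A : Matrix (Fin n) (Fin n) ℝ) (hA : Aᵀ * A = 1)
    (v : Fin n → ℝ) : enorm2 (A.mulVec v) = enorm2 v := by
  unfold enorm2
  congr 1
  have key : ∀ w : Fin n → ℝ, ∑ j, w j ^ 2 = w ⬝ᵥ w := fun w => by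
    simp [dotProduct, sq]
  rw [key, key]
  calc A.mulVec v ⬝ᵥ A.mulVec v = A.mulVec v ᵥ* A ⬝ᵥ v := by
        rw [dotProduct_comm, dotProduct_mulVec]
    _ = (Aᵀ * A).mulVec v ⬝ᵥ v := by rw [← Matrix.mulVec_transpose, Matrix.mulVec_mulVec]
    _ = v ⬝ᵥ v := by rw [hA, Matrix.one_mulVec]

set_option maxHeartbeats 1000000 in
/-- Lemma 4: every point of `𝓗₁` is mapped by `C_f R` close to a signed standard basis vector. -/
theorem stmt4 {n : ℕ} (hn : 0 < n) (θ ρ : ℝ) (hθ1 : 1 / (n : ℝ) ≤ θ) (hθ2 : θ < 1 / 3)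
    (hρ1 : 0 < ρ) (hρ2 : ρ < 1 / 1000)
    (f : Fin n → ℝ) (hf : IsUnit (Matrix.circulant f).det)
    (R : Matrix (Fin n) (Fin n) ℝ)
    (hR : spec (Matrix.circulant f * R -
        Matrix.circulant f * matInvSqrt ((Matrix.circulant f)ᵀ * Matrix.circulant f)) ≤
      θ * (1 - 3 * θ) * ρ ^ 2 / (100 * (n : ℝ) ^ 4))
    (hstar : Fin n → ℝ) (hmem : hstar ∈ H1set f ρ) :
    ∃ j : Fin n, ∃ s : ℝ, (s = 1 ∨ s = -1) ∧
      enorm2 ((Matrix.circulant f * R).mulVec hstar + s • (Pi.single j (1:ℝ) : Fin n → ℝ)) ≤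
        2 * Real.sqrt ρ := by
  obtain ⟨h, ⟨hnorm, h₀, ⟨hvals, hcard⟩, hnb⟩, rfl⟩ := hmem
  dsimp only
  set C := Matrix.circulant f with hC
  have hQps : (Cᵀ * C).PosSemidef := by
    have := Matrix.posSemidef_conjTranspose_mul_self C
    rwa [Matrix.conjTranspose_eq_transpose_of_trivial] at this
  set S := matSqrt (Cᵀ * C) with hSdef0
  have hSdef : S = (hQps.1.eigenvectorUnitary : Matrix (Fin n) (Fin n) ℝ) *
      Matrix.diagonal (fun i => Real.sqrt (hQps.1.eigenvalues i)) *
      (star hQps.1.eigenvectorUnitary : Matrix (Fin n) (Fin n) ℝ) := by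
    rw [hSdef0, matSqrt, dif_pos hQps]
  have hSS : S * S = Cᵀ * C := by
    have hU : (star hQps.1.eigenvectorUnitary : Matrix (Fin n) (Fin n) ℝ) *
        (hQps.1.eigenvectorUnitary : Matrix (Fin n) (Fin n) ℝ) = 1 :=
      Unitary.coe_star_mul_self _
    have hDD : Matrix.diagonal (fun i => Real.sqrt (hQps.1.eigenvalues i)) *
        Matrix.diagonal (fun i => Real.sqrt (hQps.1.eigenvalues i)) =
        Matrix.diagonal (RCLike.ofReal ∘ hQps.1.eigenvalues) := by
      rw [Matrix.diagonal_mul_diagonal]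
      congr 1
      funext i
      simp [Real.mul_self_sqrt (hQps.eigenvalues_nonneg i)]
    conv_rhs => rw [hQps.1.spectral_theorem, Unitary.conjStarAlgAut_apply]
    rw [hSdef, ← hDD]
    simp only [Matrix.mul_assoc]
    rw [← Matrix.mul_assoc (star _ : Matrix (Fin n) (Fin n) ℝ), hU, Matrix.one_mul]
  have hSsym : Sᵀ = S := by
    rw [← Matrix.conjTranspose_eq_transpose_of_trivial, hSdef]
    rw [Matrix.star_eq_conjTranspose]
    simp only [Matrix.conjTranspose_mul, Matrix.conjTranspose_conjTranspose,
      Matrix.diagonal_conjTranspose, star_trivial, Matrix.mul_assoc]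
  have hdetQ : IsUnit (Cᵀ * C).det := by
    rw [Matrix.det_mul, Matrix.det_transpose]; exact hf.mul hf
  have hdetS : IsUnit S.det := by
    have h1 : S.det * S.det = (Cᵀ * C).det := by rw [← Matrix.det_mul, hSS]
    exact isUnit_of_mul_isUnit_left (h1 ▸ hdetQ)
  have hdetCT : IsUnit Cᵀ.det := by rwa [Matrix.det_transpose]
  have hW : rotMat f = S * C⁻¹ := by
    rw [rotMat, ← hC, ← hSdef0]
  have horth : (rotMat f)ᵀ * rotMat f = 1 := by
    rw [hW, Matrix.transpose_mul, hSsym, Matrix.transpose_nonsing_inv]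
    calc Cᵀ⁻¹ * S * (S * C⁻¹) = Cᵀ⁻¹ * (S * S * C⁻¹) := by
          rw [Matrix.mul_assoc, Matrix.mul_assoc]
      _ = Cᵀ⁻¹ * (Cᵀ * (C * C⁻¹)) := by rw [hSS, Matrix.mul_assoc]
      _ = Cᵀ⁻¹ * Cᵀ := by rw [Matrix.mul_nonsing_inv C hf, Matrix.mul_one]
      _ = 1 := Matrix.nonsing_inv_mul Cᵀ hdetCT
  have hCSW : C * matInvSqrt (Cᵀ * C) * rotMat f = 1 := by
    have h1 : matInvSqrt (Cᵀ * C) = S⁻¹ := by rw [matInvSqrt, ← hSdef0]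
    rw [h1, hW]
    calc C * S⁻¹ * (S * C⁻¹) = C * (S⁻¹ * S * C⁻¹) := by
          rw [Matrix.mul_assoc, Matrix.mul_assoc]
      _ = C * C⁻¹ := by rw [Matrix.nonsing_inv_mul S hdetS, Matrix.one_mul]
      _ = 1 := Matrix.mul_nonsing_inv C hf
  -- locate the single nonzero entry of h₀
  obtain ⟨j₀, hj₀⟩ := Finset.card_eq_one.mp hcard
  have hj₀ne : h₀ j₀ ≠ 0 := by
    have h1 : j₀ ∈ Finset.univ.filter (fun j => h₀ j ≠ 0) := hj₀ ▸ Finset.mem_singleton_self j₀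
    exact (Finset.mem_filter.mp h1).2
  have hsq1 : h₀ j₀ ^ 2 = 1 := by
    rcases hvals j₀ with h1 | h1 | h1
    · exact absurd h1 hj₀ne
    · rw [h1, Nat.cast_one, Real.sqrt_one]; norm_num
    · rw [h1, Nat.cast_one, Real.sqrt_one]; norm_num
  have hsum1 : ∑ j, h j ^ 2 = 1 := Real.sqrt_eq_one.mp hnorm
  have habs : |h j₀ ^ 2 - 1| ≤ ρ := by
    have h1 := hnb j₀
    rwa [hsq1, Nat.cast_one, div_one] at h1
  have habs2 := abs_le.mp habs
  refine ⟨j₀, if 0 ≤ h j₀ then -1 else 1, by split <;> simp, ?_⟩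
  set s : ℝ := if 0 ≤ h j₀ then -1 else 1 with hs
  have hkey : (h j₀ + s) ^ 2 ≤ ρ ^ 2 := by
    have hx2 : (h j₀ ^ 2 - 1) ^ 2 ≤ ρ ^ 2 := by nlinarith [habs2.1, habs2.2]
    rw [hs]
    by_cases hpos : 0 ≤ h j₀
    · rw [if_pos hpos]
      nlinarith [mul_nonneg (mul_nonneg hpos (by linarith : (0:ℝ) ≤ h j₀ + 2))
        (sq_nonneg (h j₀ - 1))]
    · rw [if_neg hpos]
      push_neg at hpos
      nlinarith [mul_nonneg (mul_nonneg (by linarith : (0:ℝ) ≤ -(h j₀))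
        (by linarith : (0:ℝ) ≤ 2 - h j₀)) (sq_nonneg (h j₀ + 1))]
  set e : Fin n → ℝ := Pi.single j₀ 1 with he
  set v : Fin n → ℝ := h + s • e with hv
  have hvsum : ∑ j, v j ^ 2 ≤ ρ + ρ ^ 2 := by
    have hsplit : ∑ j, v j ^ 2
        = (∑ j ∈ Finset.univ.erase j₀, h j ^ 2) + (h j₀ + s) ^ 2 := by
      rw [← Finset.sum_erase_add _ _ (Finset.mem_univ j₀)]
      congr 1
      · refine Finset.sum_congr rfl fun j hj => ?_
        have hjne : j ≠ j₀ := (Finset.mem_erase.mp hj).1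
        simp [hv, he, Pi.single_eq_of_ne hjne]
      · simp [hv, he, Pi.single_eq_same]
    have htaileq := Finset.sum_erase_add Finset.univ (fun j => h j ^ 2) (Finset.mem_univ j₀)
    rw [hsum1] at htaileq
    have htail : ∑ j ∈ Finset.univ.erase j₀, h j ^ 2 ≤ ρ := by
      linarith [habs2.1]
    linarith [hkey, hsplit.le, hsplit.ge]
  have hev : enorm2 v ≤ Real.sqrt (2 * ρ) := by
    unfold enorm2
    apply Real.sqrt_le_sqrt
    nlinarith [hvsum]
  -- decomposition
  have hWh : (C * matInvSqrt (Cᵀ * C)).mulVec ((rotMat f).mulVec h) = h := by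
    rw [Matrix.mulVec_mulVec, hCSW, Matrix.one_mulVec]
  have hdec : (C * R).mulVec ((rotMat f).mulVec h) + s • e
      = (C * R - C * matInvSqrt (Cᵀ * C)).mulVec ((rotMat f).mulVec h) + v := by
    rw [Matrix.sub_mulVec, hWh, hv]
    abel
  rw [hdec]
  have hspec0 : (0:ℝ) ≤ spec (C * R - C * matInvSqrt (Cᵀ * C)) := norm_nonneg _
  have hnormW : enorm2 ((rotMat f).mulVec h) = 1 := by
    rw [enorm2_mulVec_orth _ horth, hnorm]
  have step1 : enorm2 ((C * R - C * matInvSqrt (Cᵀ * C)).mulVec ((rotMat f).mulVec h) + v)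
      ≤ spec (C * R - C * matInvSqrt (Cᵀ * C)) * 1 + Real.sqrt (2 * ρ) := by
    refine le_trans (enorm2_add_le _ _) (add_le_add ?_ hev)
    rw [← hnormW]
    exact enorm2_mulVec_le _ _
  -- numeric bounds
  have hn1 : (1:ℝ) ≤ (n:ℝ) := by exact_mod_cast hn
  have hθpos : 0 < θ := lt_of_lt_of_le (by positivity) hθ1
  have hn4 : (1:ℝ) ≤ (n:ℝ) ^ 4 := one_le_pow₀ hn1
  have hεle : θ * (1 - 3 * θ) * ρ ^ 2 / (100 * (n:ℝ) ^ 4) ≤ ρ ^ 2 / 100 := by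
    have hden : (0:ℝ) < 100 * (n:ℝ) ^ 4 := by positivity
    rw [div_le_div_iff₀ hden (by norm_num)]
    have hθ1' : θ * (1 - 3 * θ) ≤ 1 := by nlinarith
    have a2 : θ * (1 - 3 * θ) * ρ ^ 2 ≤ 1 * ρ ^ 2 :=
      mul_le_mul_of_nonneg_right hθ1' (sq_nonneg ρ)
    have a3 : ρ ^ 2 * 100 ≤ ρ ^ 2 * (100 * (n:ℝ) ^ 4) :=
      mul_le_mul_of_nonneg_left (by linarith) (sq_nonneg ρ)
    nlinarith [a2, a3]
  have hsq2 : Real.sqrt (2 * ρ) ≤ 1.5 * Real.sqrt ρ := by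
    rw [Real.sqrt_mul (by norm_num : (0:ℝ) ≤ 2) ρ]
    have h2 : Real.sqrt 2 ≤ 1.5 := by
      nlinarith [Real.sq_sqrt (show (0:ℝ) ≤ 2 by norm_num), Real.sqrt_nonneg 2]
    nlinarith [Real.sqrt_nonneg ρ]
  have hρsqrt : ρ ^ 2 / 100 ≤ (1/2) * Real.sqrt ρ := by
    have h2 : Real.sqrt ρ * Real.sqrt ρ = ρ := Real.mul_self_sqrt hρ1.le
    have h3 : Real.sqrt ρ ≤ 1 := Real.sqrt_le_one.mpr (by linarith)
    nlinarith [Real.sqrt_nonneg ρ]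
  calc enorm2 _ ≤ spec (C * R - C * matInvSqrt (Cᵀ * C)) * 1 + Real.sqrt (2 * ρ) := step1
    _ ≤ ρ ^ 2 / 100 + 1.5 * Real.sqrt ρ := by
        rw [mul_one]
        exact add_le_add (le_trans hR hεle) hsq2
    _ ≤ 2 * Real.sqrt ρ := by linarith
end
end

section
/- In the deterministic setting where each x_i ∈ {−1,0,1}ⁿ and ‖U‖ ≤ 2 (spectral norm), the Riemannian gradient and Riemannian Hessian of L(h) = −(1/(4N)) Σ_{i=1}^N ‖C_{x_i}Uh‖₄⁴ are Lipschitz continuous on Sⁿ⁻¹: for all h, h' ∈ Sⁿ⁻¹, ‖∇̂_L(h) − ∇̂_L(h')‖ ≤ 64n³‖h − h'‖ and ‖Ĥ_L(h) − Ĥ_L(h')‖ ≤ 272n³‖h − h'‖ (spectral norm). -/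
open Matrix MeasureTheory ProbabilityTheory Finset Filter

set_option synthInstance.maxHeartbeats 1000000
set_option maxHeartbeats 2000000
noncomputable section

namespace SAux
variable {n : ℕ}

def E : (Fin n → ℝ) ≃ₗ[ℝ] EuclideanSpace ℝ (Fin n) := (WithLp.linearEquiv 2 ℝ (Fin n → ℝ)).symm

lemma enorm2_eq (v : Fin n → ℝ) : enorm2 v = ‖E v‖ := by
  rw [EuclideanSpace.norm_eq]
  simp [enorm2, E, Real.norm_eq_abs, sq_abs, WithLp.linearEquiv]

lemma enorm2_nonneg (v : Fin n → ℝ) : 0 ≤ enorm2 v := Real.sqrt_nonneg _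

lemma clm_apply (A : Matrix (Fin n) (Fin n) ℝ) (v : Fin n → ℝ) :
    Matrix.toEuclideanCLM (𝕜 := ℝ) A (E v) = E (A *ᵥ v) := by
  simp [E, WithLp.linearEquiv, Matrix.toEuclideanCLM_toLp, Matrix.toLin'_apply]

lemma enorm2_mulVec_le (A : Matrix (Fin n) (Fin n) ℝ) (v : Fin n → ℝ) :
    enorm2 (A *ᵥ v) ≤ spec A * enorm2 v := by
  rw [enorm2_eq, enorm2_eq, ← clm_apply]
  exact (Matrix.toEuclideanCLM (𝕜 := ℝ) A).le_opNorm _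

lemma spec_le_bound {A : Matrix (Fin n) (Fin n) ℝ} {c : ℝ} (hc : 0 ≤ c)
    (H : ∀ v, enorm2 (A *ᵥ v) ≤ c * enorm2 v) : spec A ≤ c := by
  refine ContinuousLinearMap.opNorm_le_bound _ hc fun x => ?_
  have := H (E.symm x)
  rw [enorm2_eq, enorm2_eq, ← clm_apply, E.apply_symm_apply] at this
  exact this

lemma spec_nonneg (A : Matrix (Fin n) (Fin n) ℝ) : 0 ≤ spec A := norm_nonneg _

lemma spec_mul_le (A B : Matrix (Fin n) (Fin n) ℝ) : spec (A * B) ≤ spec A * spec B := by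
  rw [spec, _root_.map_mul]; exact norm_mul_le _ _

lemma spec_sub_le (A B : Matrix (Fin n) (Fin n) ℝ) : spec (A - B) ≤ spec A + spec B := by
  rw [spec, map_sub]; exact norm_sub_le _ _

lemma spec_smul (r : ℝ) (A : Matrix (Fin n) (Fin n) ℝ) : spec (r • A) = |r| * spec A := by
  rw [spec, _root_.map_smul]
  rw [norm_smul (β := EuclideanSpace ℝ (Fin n) →L[ℝ] EuclideanSpace ℝ (Fin n)) r _, Real.norm_eq_abs]
  rfl

lemma spec_sum_le {ι : Type*} (s : Finset ι) (f : ι → Matrix (Fin n) (Fin n) ℝ) :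
    spec (∑ i ∈ s, f i) ≤ ∑ i ∈ s, spec (f i) := by
  rw [spec, map_sum]; exact norm_sum_le _ _

lemma spec_transpose (A : Matrix (Fin n) (Fin n) ℝ) : spec Aᵀ = spec A := by
  have : Aᵀ = star A := by
    rw [Matrix.star_eq_conjTranspose]
    ext i j
    simp [Matrix.conjTranspose_apply]
  rw [this, spec, map_star, ContinuousLinearMap.star_eq_adjoint]
  exact LinearIsometryEquiv.norm_map (ContinuousLinearMap.adjoint) _

-- chunk 2
lemma enorm2_sq (v : Fin n → ℝ) : enorm2 v ^ 2 = ∑ j, v j ^ 2 :=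
  Real.sq_sqrt (Finset.sum_nonneg fun j _ => sq_nonneg _)

lemma dot_eq_sum (v w : Fin n → ℝ) : v ⬝ᵥ w = ∑ j, v j * w j := rfl

lemma dot_self_eq (v : Fin n → ℝ) : v ⬝ᵥ v = enorm2 v ^ 2 := by
  rw [enorm2_sq, dot_eq_sum]; exact Finset.sum_congr rfl fun j _ => (sq (v j)).symm ▸ (pow_two (v j)).symm ▸ rfl

lemma enorm2_eq_zero {v : Fin n → ℝ} : enorm2 v = 0 ↔ v = 0 := by
  rw [enorm2_eq, norm_eq_zero]
  constructor
  · intro hv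
    have := E.map_eq_zero_iff.mp hv
    exact this
  · intro hv; rw [hv, map_zero]

lemma abs_dot_le (v w : Fin n → ℝ) : |v ⬝ᵥ w| ≤ enorm2 v * enorm2 w := by
  have h1 : (v ⬝ᵥ w) ^ 2 ≤ (∑ j, v j ^ 2) * (∑ j, w j ^ 2) := by
    rw [dot_eq_sum]
    exact Finset.sum_mul_sq_le_sq_mul_sq _ _ _
  have := Real.sqrt_le_sqrt h1
  rw [Real.sqrt_sq_eq_abs, Real.sqrt_mul (Finset.sum_nonneg fun j _ => sq_nonneg _)] at this
  exact this

lemma enorm2_add_le (v w : Fin n → ℝ) : enorm2 (v + w) ≤ enorm2 v + enorm2 w := by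
  rw [enorm2_eq, enorm2_eq, enorm2_eq, map_add]; exact norm_add_le _ _

lemma enorm2_smul (r : ℝ) (v : Fin n → ℝ) : enorm2 (r • v) = |r| * enorm2 v := by
  rw [enorm2_eq, enorm2_eq, _root_.map_smul, norm_smul, Real.norm_eq_abs]

lemma enorm2_sum_le {ι : Type*} (s : Finset ι) (f : ι → Fin n → ℝ) :
    enorm2 (∑ i ∈ s, f i) ≤ ∑ i ∈ s, enorm2 (f i) := by
  simp only [enorm2_eq, map_sum]; exact norm_sum_le _ _

lemma enorm2_le_of_abs_le {a b : Fin n → ℝ} {C : ℝ} (hC : 0 ≤ C)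
    (H : ∀ j, |a j| ≤ C * |b j|) : enorm2 a ≤ C * enorm2 b := by
  have h1 : ∑ j, a j ^ 2 ≤ C ^ 2 * ∑ j, b j ^ 2 := by
    rw [Finset.mul_sum]
    refine Finset.sum_le_sum fun j _ => ?_
    have := sq_le_sq' (neg_le_of_abs_le ?_) (le_of_abs_le (H j))
    · calc a j ^ 2 ≤ (C * |b j|) ^ 2 := this
        _ = C ^ 2 * b j ^ 2 := by rw [mul_pow, sq_abs]
    · exact H j
  have := Real.sqrt_le_sqrt h1
  rw [Real.sqrt_mul (sq_nonneg _), Real.sqrt_sq hC] at this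
  exact this

lemma enorm2_le_sqrt_mul {w : Fin n → ℝ} {c : ℝ} (hc : 0 ≤ c) (H : ∀ j, |w j| ≤ c) :
    enorm2 w ≤ Real.sqrt n * c := by
  have h1 : ∑ j, w j ^ 2 ≤ (n : ℝ) * c ^ 2 := by
    calc ∑ j, w j ^ 2 ≤ ∑ _j : Fin n, c ^ 2 :=
          Finset.sum_le_sum fun j _ => by
            rw [← sq_abs]; exact pow_le_pow_left₀ (abs_nonneg _) (H j) 2
      _ = (n : ℝ) * c ^ 2 := by simp [mul_comm]
  have := Real.sqrt_le_sqrt h1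
  rw [Real.sqrt_mul (by positivity), Real.sqrt_sq hc] at this
  exact this

lemma abs_apply_le (v : Fin n → ℝ) (j : Fin n) : |v j| ≤ enorm2 v := by
  have : v j ^ 2 ≤ ∑ k, v k ^ 2 :=
    Finset.single_le_sum (fun k _ => sq_nonneg (v k)) (Finset.mem_univ j)
  have := Real.sqrt_le_sqrt this
  rwa [Real.sqrt_sq_eq_abs] at this

lemma abs_mulVec_le (A : Matrix (Fin n) (Fin n) ℝ) (v : Fin n → ℝ) (j : Fin n) :
    |(A *ᵥ v) j| ≤ enorm2 (A j) * enorm2 v := abs_dot_le _ _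


-- chunk 3
lemma spec_le_rows {A : Matrix (Fin n) (Fin n) ℝ} {r : ℝ} (hr : 0 ≤ r)
    (H : ∀ j, enorm2 (A j) ≤ r) : spec A ≤ Real.sqrt n * r := by
  refine spec_le_bound (by positivity) fun v => ?_
  have h1 : enorm2 (A *ᵥ v) ≤ Real.sqrt n * (r * enorm2 v) := by
    refine enorm2_le_sqrt_mul (mul_nonneg hr (enorm2_nonneg v)) fun j => ?_
    calc |(A *ᵥ v) j| ≤ enorm2 (A j) * enorm2 v := abs_mulVec_le A v j
      _ ≤ r * enorm2 v := mul_le_mul_of_nonneg_right (H j) (enorm2_nonneg v)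
  linarith [h1]

lemma spec_diagonal_le {d : Fin n → ℝ} {c : ℝ} (hc : 0 ≤ c) (H : ∀ m, |d m| ≤ c) :
    spec (Matrix.diagonal d) ≤ c := by
  refine spec_le_bound hc fun v => ?_
  refine enorm2_le_of_abs_le hc fun j => ?_
  rw [Matrix.mulVec_diagonal, abs_mul]
  exact mul_le_mul_of_nonneg_right (H j) (abs_nonneg _)

lemma enorm2_circulant_row [NeZero n] (x : Fin n → ℝ) (j : Fin n) :
    enorm2 (Matrix.circulant x j) = enorm2 x := by
  unfold enorm2
  congr 1
  refine Fintype.sum_equiv (Equiv.subLeft j) _ _ fun k => ?_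
  simp [Matrix.circulant_apply, Equiv.subLeft]

lemma enorm2_le_sqrt_of_pm {x : Fin n → ℝ} (hx : ∀ j, x j = -1 ∨ x j = 0 ∨ x j = 1) :
    enorm2 x ≤ Real.sqrt n := by
  have := enorm2_le_sqrt_mul (w := x) (c := 1) zero_le_one fun j => by
    rcases hx j with h | h | h <;> rw [h] <;> norm_num
  simpa using this

lemma spec_circulant_le [NeZero n] {x : Fin n → ℝ} (hx : ∀ j, x j = -1 ∨ x j = 0 ∨ x j = 1) :
    spec (Matrix.circulant x) ≤ (n : ℝ) := by
  have h1 : spec (Matrix.circulant x) ≤ Real.sqrt n * Real.sqrt n :=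
    spec_le_rows (Real.sqrt_nonneg _) fun j => by
      rw [enorm2_circulant_row]; exact enorm2_le_sqrt_of_pm hx
  rwa [Real.mul_self_sqrt (Nat.cast_nonneg n)] at h1

-- chunk 4
lemma spec_zero : spec (0 : Matrix (Fin n) (Fin n) ℝ) = 0 := by
  rw [spec, map_zero, norm_zero]

lemma vecMulVec_mulVec (h w v : Fin n → ℝ) :
    Matrix.vecMulVec h w *ᵥ v = (w ⬝ᵥ v) • h := by
  ext j
  simp only [Matrix.mulVec, Matrix.vecMulVec_apply, dotProduct, Pi.smul_apply, smul_eq_mul,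
    Finset.sum_mul, Finset.mul_sum]
  exact Finset.sum_congr rfl fun k _ => by ring

lemma le_of_sq_le_sq'' {a b : ℝ} (hb : 0 ≤ b) (h : a ^ 2 ≤ b ^ 2) (ha : 0 ≤ a) : a ≤ b := by
  nlinarith

lemma dot_sub_self (h h' : Fin n → ℝ) :
    (h - h') ⬝ᵥ (h - h') = h ⬝ᵥ h - 2 * (h ⬝ᵥ h') + h' ⬝ᵥ h' := by
  simp only [sub_dotProduct, dotProduct_sub]
  rw [dotProduct_comm h' h]
  ring

lemma dot_add_self (h h' : Fin n → ℝ) :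
    (h + h') ⬝ᵥ (h + h') = h ⬝ᵥ h + 2 * (h ⬝ᵥ h') + h' ⬝ᵥ h' := by
  simp only [add_dotProduct, dotProduct_add]
  rw [dotProduct_comm h' h]
  ring

lemma spec_Pperp_le {h : Fin n → ℝ} (hh : enorm2 h = 1) :
    spec (1 - Matrix.vecMulVec h h) ≤ 1 := by
  have hdot : h ⬝ᵥ h = 1 := by rw [dot_self_eq, hh]; norm_num
  refine spec_le_bound zero_le_one fun v => ?_
  rw [Matrix.sub_mulVec, Matrix.one_mulVec, vecMulVec_mulVec]
  set c := h ⬝ᵥ v with hc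
  refine le_of_sq_le_sq'' (mul_nonneg zero_le_one (enorm2_nonneg v)) ?_ (enorm2_nonneg _)
  rw [one_mul, ← dot_self_eq, ← dot_self_eq]
  have expand : (v - c • h) ⬝ᵥ (v - c • h) = v ⬝ᵥ v - 2 * c * (h ⬝ᵥ v) + c ^ 2 * (h ⬝ᵥ h) := by
    simp only [sub_dotProduct, dotProduct_sub, smul_dotProduct, dotProduct_smul, smul_eq_mul]
    rw [dotProduct_comm v h]
    ring
  rw [expand, hdot, ← hc]
  nlinarith [sq_nonneg c]

lemma vecMulVec_neg_neg (h : Fin n → ℝ) :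
    Matrix.vecMulVec (-h) (-h) = Matrix.vecMulVec h h := by
  ext i j; simp [Matrix.vecMulVec_apply]

lemma spec_vmv_sub {h h' : Fin n → ℝ} (hh : enorm2 h = 1) (hh' : enorm2 h' = 1) :
    spec (Matrix.vecMulVec h h - Matrix.vecMulVec h' h') ≤ enorm2 (h - h') := by
  have hdot : h ⬝ᵥ h = 1 := by rw [dot_self_eq, hh]; norm_num
  have hdot' : h' ⬝ᵥ h' = 1 := by rw [dot_self_eq, hh']; norm_num
  by_cases hcase : h = h'
  · rw [hcase, sub_self, spec_zero]; exact enorm2_nonneg _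
  by_cases hcase2 : h = -h'
  · rw [hcase2, vecMulVec_neg_neg, sub_self, spec_zero]; exact enorm2_nonneg _
  set c := h ⬝ᵥ h' with hcdef
  have hsub : (h - h') ⬝ᵥ (h - h') = 2 - 2 * c := by
    rw [dot_sub_self, hdot, hdot', ← hcdef]; ring
  have hc1 : c < 1 := by
    have hne : h - h' ≠ 0 := sub_ne_zero.mpr hcase
    have : enorm2 (h - h') ≠ 0 := fun hz => hne (enorm2_eq_zero.mp hz)
    have hpos : 0 < enorm2 (h - h') := lt_of_le_of_ne (enorm2_nonneg _) (Ne.symm this)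
    have : 0 < (h - h') ⬝ᵥ (h - h') := by rw [dot_self_eq]; exact pow_pos hpos 2
    rw [hsub] at this; linarith
  have hc2 : -1 < c := by
    have hne : h + h' ≠ 0 := fun hz => hcase2 (by
      have := eq_neg_of_add_eq_zero_left hz
      exact this)
    have hnz : enorm2 (h + h') ≠ 0 := fun hz => hne (enorm2_eq_zero.mp hz)
    have hpos : 0 < enorm2 (h + h') := lt_of_le_of_ne (enorm2_nonneg _) (Ne.symm hnz)
    have : 0 < (h + h') ⬝ᵥ (h + h') := by rw [dot_self_eq]; exact pow_pos hpos 2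
    rw [dot_add_self, hdot, hdot', ← hcdef] at this; linarith
  refine spec_le_bound (enorm2_nonneg _) fun v => ?_
  rw [Matrix.sub_mulVec, vecMulVec_mulVec, vecMulVec_mulVec]
  set a := h ⬝ᵥ v with hadef
  set b := h' ⬝ᵥ v with hbdef
  have hq : 0 ≤ v ⬝ᵥ v := by rw [dot_self_eq]; positivity
  set q := v ⬝ᵥ v with hqdef
  refine le_of_sq_le_sq'' (mul_nonneg (enorm2_nonneg _) (enorm2_nonneg _)) ?_ (enorm2_nonneg _)
  have hL : enorm2 (a • h - b • h') ^ 2 = a ^ 2 + b ^ 2 - 2 * a * b * c := by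
    rw [← dot_self_eq]
    simp only [sub_dotProduct, dotProduct_sub, smul_dotProduct, dotProduct_smul, smul_eq_mul]
    rw [dotProduct_comm h' h, hdot, hdot', ← hcdef]
    ring
  have hR : (enorm2 (h - h') * enorm2 v) ^ 2 = (2 - 2 * c) * q := by
    rw [mul_pow, ← dot_self_eq, ← dot_self_eq, hsub, ← hqdef]
  rw [hL, hR]
  -- certificate: ‖(b*c-a)•h + (a*c-b)•h' + (1-c²)•v‖² ≥ 0
  have cert : 0 ≤ ((b * c - a) • h + (a * c - b) • h' + (1 - c ^ 2) • v) ⬝ᵥ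
      ((b * c - a) • h + (a * c - b) • h' + (1 - c ^ 2) • v) := by
    rw [dot_self_eq]; positivity
  have certExp : ((b * c - a) • h + (a * c - b) • h' + (1 - c ^ 2) • v) ⬝ᵥ
      ((b * c - a) • h + (a * c - b) • h' + (1 - c ^ 2) • v)
      = (1 - c ^ 2) * ((1 - c ^ 2) * q - (a ^ 2 + b ^ 2 - 2 * a * b * c)) := by
    simp only [add_dotProduct, dotProduct_add, smul_dotProduct, dotProduct_smul, smul_eq_mul]
    rw [dotProduct_comm h' h, dotProduct_comm v h, dotProduct_comm v h',
      hdot, hdot', ← hcdef, ← hadef, ← hbdef, ← hqdef]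
    ring
  rw [certExp] at cert
  have hcc : 0 < 1 - c ^ 2 := by nlinarith
  have key : a ^ 2 + b ^ 2 - 2 * a * b * c ≤ (1 - c ^ 2) * q := by
    nlinarith [cert, hcc]
  nlinarith [key, hq, sq_nonneg (1 - c)]

-- chunk 5 : derivatives
variable {N : ℕ}

def Am (x : Fin N → Fin n → ℝ) (U : Matrix (Fin n) (Fin n) ℝ) (i : Fin N) :
    Matrix (Fin n) (Fin n) ℝ := Matrix.circulant (x i) * U

def phiC (A : Matrix (Fin n) (Fin n) ℝ) (m : Fin n) : (Fin n → ℝ) →L[ℝ] ℝ :=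
  LinearMap.toContinuousLinearMap ((LinearMap.proj m).comp A.mulVecLin)

lemma phiC_apply (A : Matrix (Fin n) (Fin n) ℝ) (m : Fin n) (v : Fin n → ℝ) :
    phiC A m v = (A *ᵥ v) m := rfl

lemma phiC_single (A : Matrix (Fin n) (Fin n) ℝ) (m j : Fin n) :
    phiC A m (Pi.single j 1) = A m j := by
  rw [phiC_apply, Matrix.mulVec_single]
  simp

lemma hasFDerivAt_phi_pow (k : ℕ) (A : Matrix (Fin n) (Fin n) ℝ) (m : Fin n) (h : Fin n → ℝ) :
    HasFDerivAt (fun v => phiC A m v ^ k)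
      (((k : ℝ) * phiC A m h ^ (k - 1)) • phiC A m) h := by
  have h1 := (phiC A m).hasFDerivAt (x := h)
  have h2 := hasDerivAt_pow k (phiC A m h)
  exact h2.comp_hasFDerivAt h h1

lemma hasFDerivAt_Lobj (x : Fin N → Fin n → ℝ) (U : Matrix (Fin n) (Fin n) ℝ) (h : Fin n → ℝ) :
    HasFDerivAt (Lobj x U)
      ((-(1 / (4 * (N : ℝ)))) • ∑ i, ∑ m,
        (((4 : ℕ) : ℝ) * phiC (Am x U i) m h ^ 3) • phiC (Am x U i) m) h := by
  have hsum : HasFDerivAt (fun v => ∑ i, ∑ m, phiC (Am x U i) m v ^ 4)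
      (∑ i, ∑ m, (((4 : ℕ) : ℝ) * phiC (Am x U i) m h ^ 3) • phiC (Am x U i) m) h := by
    refine HasFDerivAt.fun_sum fun i _ => HasFDerivAt.fun_sum fun m _ => ?_
    exact hasFDerivAt_phi_pow 4 (Am x U i) m h
  have := hsum.const_mul (-(1 / (4 * (N : ℝ))))
  exact this

lemma fderiv_Lobj_single (x : Fin N → Fin n → ℝ) (U : Matrix (Fin n) (Fin n) ℝ)
    (h : Fin n → ℝ) (j : Fin n) :
    fderiv ℝ (Lobj x U) h (Pi.single j 1) =
      ∑ i, ∑ m, (-(1 / (N : ℝ)) * (Am x U i) m j) * ((Am x U i *ᵥ h) m) ^ 3 := by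
  rw [(hasFDerivAt_Lobj x U h).fderiv]
  simp only [ContinuousLinearMap.coe_smul', Pi.smul_apply, ContinuousLinearMap.coe_sum',
    Finset.sum_apply, ContinuousLinearMap.smul_apply, phiC_single, phiC_apply, smul_eq_mul]
  rw [Finset.mul_sum]
  refine Finset.sum_congr rfl fun i _ => ?_
  rw [Finset.mul_sum]
  refine Finset.sum_congr rfl fun m _ => ?_
  by_cases hN : (N : ℝ) = 0
  · rw [hN]; norm_num
  · field_simp
    simp [Matrix.mulVec_single_one]

lemma egrad_Lobj (x : Fin N → Fin n → ℝ) (U : Matrix (Fin n) (Fin n) ℝ) (h : Fin n → ℝ) :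
    egrad (Lobj x U) h =
      (-(1 / (N : ℝ))) • ∑ i, (Am x U i)ᵀ *ᵥ (fun m => ((Am x U i *ᵥ h) m) ^ 3) := by
  funext j
  rw [egrad, fderiv_Lobj_single]
  simp only [Pi.smul_apply, Finset.sum_apply, smul_eq_mul, Matrix.mulVec, dotProduct,
    Matrix.transpose_apply]
  rw [Finset.mul_sum]
  refine Finset.sum_congr rfl fun i _ => ?_
  rw [Finset.mul_sum]
  exact Finset.sum_congr rfl fun m _ => by ring

lemma ehess_Lobj (x : Fin N → Fin n → ℝ) (U : Matrix (Fin n) (Fin n) ℝ) (h : Fin n → ℝ) :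
    ehess (Lobj x U) h =
      (-(3 / (N : ℝ))) • ∑ i,
        (Am x U i)ᵀ * Matrix.diagonal (fun m => ((Am x U i *ᵥ h) m) ^ 2) * (Am x U i) := by
  ext j k
  have hfun : (fun v => fderiv ℝ (Lobj x U) v (Pi.single j 1)) =
      (fun v => ∑ i, ∑ m, (-(1 / (N : ℝ)) * (Am x U i) m j) * (phiC (Am x U i) m v) ^ 3) := by
    funext v
    rw [fderiv_Lobj_single]
    simp only [phiC_apply]
  have hder : HasFDerivAt
      (fun v => ∑ i, ∑ m, (-(1 / (N : ℝ)) * (Am x U i) m j) * (phiC (Am x U i) m v) ^ 3)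
      (∑ i, ∑ m, (-(1 / (N : ℝ)) * (Am x U i) m j) •
        ((((3 : ℕ) : ℝ) * phiC (Am x U i) m h ^ 2) • phiC (Am x U i) m)) h := by
    refine HasFDerivAt.fun_sum fun i _ => HasFDerivAt.fun_sum fun m _ => ?_
    exact (hasFDerivAt_phi_pow 3 (Am x U i) m h).const_mul _
  rw [ehess, Matrix.of_apply, hfun, hder.fderiv]
  simp only [ContinuousLinearMap.coe_sum', Finset.sum_apply, ContinuousLinearMap.smul_apply,
    phiC_single, phiC_apply, smul_eq_mul, Pi.smul_apply, Matrix.smul_apply, Matrix.sum_apply,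
    Matrix.mul_apply, Matrix.mul_diagonal, Matrix.transpose_apply, Matrix.mulVec_single, mul_one,
    Matrix.diagonal_apply, mul_ite, mul_zero, Finset.sum_ite_eq', Finset.mem_univ, if_true]
  rw [Finset.mul_sum]
  refine Finset.sum_congr rfl fun i _ => ?_
  rw [Finset.mul_sum]
  refine Finset.sum_congr rfl fun m _ => ?_
  by_cases hN : (N : ℝ) = 0
  · rw [hN]; norm_num
  · field_simp
    ring_nf
    simp

-- chunk 6 : quantitative bounds
section Bounds
variable {N : ℕ} {x : Fin N → Fin n → ℝ} {U : Matrix (Fin n) (Fin n) ℝ}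

lemma cube_diff_abs {a b M : ℝ} (hM : 0 ≤ M) (ha : |a| ≤ M) (hb : |b| ≤ M) :
    |a ^ 3 - b ^ 3| ≤ 3 * M ^ 2 * |a - b| := by
  have h1 : a ^ 3 - b ^ 3 = (a - b) * (a ^ 2 + a * b + b ^ 2) := by ring
  rw [h1, abs_mul, mul_comm]
  refine mul_le_mul_of_nonneg_right ?_ (abs_nonneg _)
  calc |a ^ 2 + a * b + b ^ 2| ≤ |a ^ 2 + a * b| + |b ^ 2| := abs_add_le _ _
    _ ≤ |a ^ 2| + |a * b| + |b ^ 2| := by gcongr; exact abs_add_le _ _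
    _ = |a| ^ 2 + |a| * |b| + |b| ^ 2 := by rw [abs_mul, abs_pow, abs_pow]
    _ ≤ M ^ 2 + M * M + M ^ 2 := by gcongr
    _ = 3 * M ^ 2 := by ring

lemma sq_diff_abs {a b M : ℝ} (hM : 0 ≤ M) (ha : |a| ≤ M) (hb : |b| ≤ M) :
    |a ^ 2 - b ^ 2| ≤ 2 * M * |a - b| := by
  have h1 : a ^ 2 - b ^ 2 = (a - b) * (a + b) := by ring
  rw [h1, abs_mul, mul_comm]
  refine mul_le_mul_of_nonneg_right ?_ (abs_nonneg _)
  calc |a + b| ≤ |a| + |b| := abs_add_le _ _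
    _ ≤ M + M := by gcongr
    _ = 2 * M := by ring

variable (hn : 0 < n) (hx : ∀ i j, x i j = -1 ∨ x i j = 0 ∨ x i j = 1) (hU : spec U ≤ 2)

section
variable [NeZero n]

include hx hU in
lemma spec_Am_le (i : Fin N) : spec (Am x U i) ≤ 2 * n := by
  calc spec (Am x U i) ≤ spec (Matrix.circulant (x i)) * spec U := spec_mul_le _ _
    _ ≤ (n : ℝ) * 2 := by
        have h1 := spec_circulant_le (hx i)
        have h2 := spec_nonneg (Matrix.circulant (x i))
        have h3 := spec_nonneg U
        nlinarith
    _ = 2 * n := by ring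

include hx hU in
lemma enorm2_Am_mulVec_le (i : Fin N) (v : Fin n → ℝ) :
    enorm2 (Am x U i *ᵥ v) ≤ 2 * n * enorm2 v := by
  calc enorm2 (Am x U i *ᵥ v) ≤ spec (Am x U i) * enorm2 v := enorm2_mulVec_le _ _
    _ ≤ 2 * n * enorm2 v := mul_le_mul_of_nonneg_right (spec_Am_le hx hU i) (enorm2_nonneg _)

include hx hU in
lemma abs_Am_mulVec_le (i : Fin N) (v : Fin n → ℝ) (m : Fin n) :
    |(Am x U i *ᵥ v) m| ≤ 2 * Real.sqrt n * enorm2 v := by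
  have h0 : Am x U i *ᵥ v = Matrix.circulant (x i) *ᵥ (U *ᵥ v) := by
    rw [Am, ← Matrix.mulVec_mulVec]
  rw [h0]
  calc |(Matrix.circulant (x i) *ᵥ (U *ᵥ v)) m|
      ≤ enorm2 (Matrix.circulant (x i) m) * enorm2 (U *ᵥ v) := abs_mulVec_le _ _ _
    _ ≤ Real.sqrt n * (2 * enorm2 v) := by
        refine mul_le_mul ?_ ?_ (enorm2_nonneg _) (Real.sqrt_nonneg _)
        · rw [enorm2_circulant_row]; exact enorm2_le_sqrt_of_pm (hx i)
        · calc enorm2 (U *ᵥ v) ≤ spec U * enorm2 v := enorm2_mulVec_le _ _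
            _ ≤ 2 * enorm2 v := mul_le_mul_of_nonneg_right hU (enorm2_nonneg _)
    _ = 2 * Real.sqrt n * enorm2 v := by ring


variable (hN : 0 < N)

include hn hx hU hN in
lemma grad_bound {h : Fin n → ℝ} (hh : enorm2 h = 1) :
    enorm2 (egrad (Lobj x U) h) ≤ 16 * (n : ℝ) ^ 3 := by
  have hs : Real.sqrt n * Real.sqrt n = (n : ℝ) := Real.mul_self_sqrt (Nat.cast_nonneg n)
  have hsnn : (0 : ℝ) ≤ Real.sqrt n := Real.sqrt_nonneg n
  have hn1 : (1 : ℝ) ≤ n := by exact_mod_cast hn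
  have hNR : (0 : ℝ) < N := by exact_mod_cast hN
  rw [egrad_Lobj, enorm2_smul]
  have habs : |(-(1 / (N : ℝ)))| = 1 / N := by
    rw [abs_neg, abs_of_nonneg (by positivity)]
  rw [habs]
  have hterm : ∀ i : Fin N,
      enorm2 ((Am x U i)ᵀ *ᵥ (fun m => ((Am x U i *ᵥ h) m) ^ 3)) ≤ 16 * (n : ℝ) ^ 3 := by
    intro i
    have h1 : enorm2 ((fun m => ((Am x U i *ᵥ h) m) ^ 3)) ≤
        (4 * n) * enorm2 (Am x U i *ᵥ h) := by
      refine enorm2_le_of_abs_le (by positivity) fun m => ?_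
      have hm : |(Am x U i *ᵥ h) m| ≤ 2 * Real.sqrt n := by
        have := abs_Am_mulVec_le hx hU i h m
        rwa [hh, mul_one] at this
      have hnn : 0 ≤ |(Am x U i *ᵥ h) m| := abs_nonneg _
      have hs2 : (2 * Real.sqrt n) ^ 2 = 4 * (n : ℝ) := by
        rw [mul_pow, Real.sq_sqrt (Nat.cast_nonneg n)]; ring
      rw [abs_pow]
      calc |(Am x U i *ᵥ h) m| ^ 3 = |(Am x U i *ᵥ h) m| ^ 2 * |(Am x U i *ᵥ h) m| := by ring
        _ ≤ (2 * Real.sqrt n) ^ 2 * |(Am x U i *ᵥ h) m| :=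
            mul_le_mul_of_nonneg_right (pow_le_pow_left₀ hnn hm 2) hnn
        _ = 4 * (n : ℝ) * |(Am x U i *ᵥ h) m| := by rw [hs2]
    have h2 : enorm2 (Am x U i *ᵥ h) ≤ 2 * n := by
      have := enorm2_Am_mulVec_le hx hU i h
      rwa [hh, mul_one] at this
    calc enorm2 ((Am x U i)ᵀ *ᵥ (fun m => ((Am x U i *ᵥ h) m) ^ 3))
        ≤ spec (Am x U i)ᵀ * enorm2 (fun m => ((Am x U i *ᵥ h) m) ^ 3) := enorm2_mulVec_le _ _
      _ ≤ (2 * n) * ((4 * n) * (2 * n)) := by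
          rw [spec_transpose]
          have hA := spec_Am_le hx hU i
          have hAnn := spec_nonneg (Am x U i)
          have he2 := enorm2_nonneg (Am x U i *ᵥ h)
          have h3 : enorm2 (fun m => ((Am x U i *ᵥ h) m) ^ 3) ≤ (4 * n) * (2 * n) :=
            h1.trans (mul_le_mul_of_nonneg_left h2 (by positivity))
          exact mul_le_mul hA h3 (enorm2_nonneg _) (by positivity)
      _ = 16 * (n : ℝ) ^ 3 := by ring
  calc (1 / (N : ℝ)) * enorm2 (∑ i, (Am x U i)ᵀ *ᵥ (fun m => ((Am x U i *ᵥ h) m) ^ 3))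
      ≤ (1 / (N : ℝ)) * ∑ i, enorm2 ((Am x U i)ᵀ *ᵥ (fun m => ((Am x U i *ᵥ h) m) ^ 3)) := by
        refine mul_le_mul_of_nonneg_left (enorm2_sum_le _ _) (by positivity)
    _ ≤ (1 / (N : ℝ)) * ∑ _i : Fin N, (16 * (n : ℝ) ^ 3) :=
        mul_le_mul_of_nonneg_left (Finset.sum_le_sum fun i _ => hterm i) (by positivity)
    _ = 16 * (n : ℝ) ^ 3 := by
        rw [Finset.sum_const, Finset.card_univ, Fintype.card_fin, nsmul_eq_mul]
        field_simp

include hn hx hU hN in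
lemma grad_lip {h h' : Fin n → ℝ} (hh : enorm2 h = 1) (hh' : enorm2 h' = 1) :
    enorm2 (egrad (Lobj x U) h - egrad (Lobj x U) h') ≤
      48 * (n : ℝ) ^ 3 * enorm2 (h - h') := by
  have hs : Real.sqrt n * Real.sqrt n = (n : ℝ) := Real.mul_self_sqrt (Nat.cast_nonneg n)
  have hsnn : (0 : ℝ) ≤ Real.sqrt n := Real.sqrt_nonneg n
  have hNR : (0 : ℝ) < N := by exact_mod_cast hN
  have hs2 : (2 * Real.sqrt n) ^ 2 = 4 * (n : ℝ) := by
    rw [mul_pow, Real.sq_sqrt (Nat.cast_nonneg n)]; ring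
  set d := enorm2 (h - h') with hd
  have hdnn : 0 ≤ d := enorm2_nonneg _
  rw [egrad_Lobj, egrad_Lobj, ← smul_sub, ← Finset.sum_sub_distrib]
  simp_rw [← Matrix.mulVec_sub]
  rw [enorm2_smul]
  have habs : |(-(1 / (N : ℝ)))| = 1 / N := by
    rw [abs_neg, abs_of_nonneg (by positivity)]
  rw [habs]
  have hterm : ∀ i : Fin N,
      enorm2 ((Am x U i)ᵀ *ᵥ
        ((fun m => ((Am x U i *ᵥ h) m) ^ 3) - fun m => ((Am x U i *ᵥ h') m) ^ 3)) ≤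
      48 * (n : ℝ) ^ 3 * d := by
    intro i
    have h1 : enorm2 ((fun m => ((Am x U i *ᵥ h) m) ^ 3) - fun m => ((Am x U i *ᵥ h') m) ^ 3) ≤
        (12 * n) * enorm2 (Am x U i *ᵥ h - Am x U i *ᵥ h') := by
      refine enorm2_le_of_abs_le (by positivity) fun m => ?_
      have hm : |(Am x U i *ᵥ h) m| ≤ 2 * Real.sqrt n := by
        have := abs_Am_mulVec_le hx hU i h m; rwa [hh, mul_one] at this
      have hm' : |(Am x U i *ᵥ h') m| ≤ 2 * Real.sqrt n := by
        have := abs_Am_mulVec_le hx hU i h' m; rwa [hh', mul_one] at this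
      have := cube_diff_abs (by positivity) hm hm'
      rw [hs2] at this
      simp only [Pi.sub_apply]
      calc |(Am x U i *ᵥ h) m ^ 3 - (Am x U i *ᵥ h') m ^ 3|
          ≤ 3 * (4 * (n : ℝ)) * |(Am x U i *ᵥ h) m - (Am x U i *ᵥ h') m| := this
        _ = 12 * (n : ℝ) * |(Am x U i *ᵥ h) m - (Am x U i *ᵥ h') m| := by ring
    have h2 : enorm2 (Am x U i *ᵥ h - Am x U i *ᵥ h') ≤ 2 * n * d := by
      rw [← Matrix.mulVec_sub]
      exact enorm2_Am_mulVec_le hx hU i (h - h')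
    calc enorm2 ((Am x U i)ᵀ *ᵥ
          ((fun m => ((Am x U i *ᵥ h) m) ^ 3) - fun m => ((Am x U i *ᵥ h') m) ^ 3))
        ≤ spec (Am x U i)ᵀ *
          enorm2 ((fun m => ((Am x U i *ᵥ h) m) ^ 3) - fun m => ((Am x U i *ᵥ h') m) ^ 3) :=
          enorm2_mulVec_le _ _
      _ ≤ (2 * n) * ((12 * n) * (2 * n * d)) := by
          rw [spec_transpose]
          have hA := spec_Am_le hx hU i
          have h3 : enorm2 ((fun m => ((Am x U i *ᵥ h) m) ^ 3) - fun m => ((Am x U i *ᵥ h') m) ^ 3)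
              ≤ (12 * n) * (2 * n * d) :=
            h1.trans (mul_le_mul_of_nonneg_left h2 (by positivity))
          exact mul_le_mul hA h3 (enorm2_nonneg _) (by positivity)
      _ = 48 * (n : ℝ) ^ 3 * d := by ring
  calc (1 / (N : ℝ)) * enorm2 (∑ i, (Am x U i)ᵀ *ᵥ
        ((fun m => ((Am x U i *ᵥ h) m) ^ 3) - fun m => ((Am x U i *ᵥ h') m) ^ 3))
      ≤ (1 / (N : ℝ)) * ∑ i, enorm2 ((Am x U i)ᵀ *ᵥ
        ((fun m => ((Am x U i *ᵥ h) m) ^ 3) - fun m => ((Am x U i *ᵥ h') m) ^ 3)) :=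
        mul_le_mul_of_nonneg_left (enorm2_sum_le _ _) (by positivity)
    _ ≤ (1 / (N : ℝ)) * ∑ _i : Fin N, (48 * (n : ℝ) ^ 3 * d) :=
        mul_le_mul_of_nonneg_left (Finset.sum_le_sum fun i _ => hterm i) (by positivity)
    _ = 48 * (n : ℝ) ^ 3 * d := by
        rw [Finset.sum_const, Finset.card_univ, Fintype.card_fin, nsmul_eq_mul]
        field_simp

include hn hx hU hN in
lemma hess_bound {h : Fin n → ℝ} (hh : enorm2 h = 1) :
    spec (ehess (Lobj x U) h) ≤ 48 * (n : ℝ) ^ 3 := by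
  have hNR : (0 : ℝ) < N := by exact_mod_cast hN
  have hs2 : (2 * Real.sqrt n) ^ 2 = 4 * (n : ℝ) := by
    rw [mul_pow, Real.sq_sqrt (Nat.cast_nonneg n)]; ring
  rw [ehess_Lobj, spec_smul]
  have habs : |(-(3 / (N : ℝ)))| = 3 / N := by
    rw [abs_neg, abs_of_nonneg (by positivity)]
  rw [habs]
  have hterm : ∀ i : Fin N,
      spec ((Am x U i)ᵀ * Matrix.diagonal (fun m => ((Am x U i *ᵥ h) m) ^ 2) * (Am x U i)) ≤
        16 * (n : ℝ) ^ 3 := by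
    intro i
    have hD : spec (Matrix.diagonal (fun m => ((Am x U i *ᵥ h) m) ^ 2)) ≤ 4 * n := by
      refine spec_diagonal_le (by positivity) fun m => ?_
      have hm : |(Am x U i *ᵥ h) m| ≤ 2 * Real.sqrt n := by
        have := abs_Am_mulVec_le hx hU i h m; rwa [hh, mul_one] at this
      rw [abs_pow]
      calc |(Am x U i *ᵥ h) m| ^ 2 ≤ (2 * Real.sqrt n) ^ 2 :=
            pow_le_pow_left₀ (abs_nonneg _) hm 2
        _ = 4 * (n : ℝ) := hs2
    have hA := spec_Am_le hx hU i
    have hAnn := spec_nonneg (Am x U i)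
    calc spec ((Am x U i)ᵀ * Matrix.diagonal (fun m => ((Am x U i *ᵥ h) m) ^ 2) * (Am x U i))
        ≤ spec ((Am x U i)ᵀ * Matrix.diagonal (fun m => ((Am x U i *ᵥ h) m) ^ 2)) *
            spec (Am x U i) := spec_mul_le _ _
      _ ≤ (spec (Am x U i)ᵀ * spec (Matrix.diagonal (fun m => ((Am x U i *ᵥ h) m) ^ 2))) *
            spec (Am x U i) :=
          mul_le_mul_of_nonneg_right (spec_mul_le _ _) hAnn
      _ ≤ ((2 * n) * (4 * n)) * (2 * n) := by
          rw [spec_transpose]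
          refine mul_le_mul ?_ hA hAnn (by positivity)
          exact mul_le_mul hA hD (spec_nonneg _) (by positivity)
      _ = 16 * (n : ℝ) ^ 3 := by ring
  calc (3 / (N : ℝ)) * spec (∑ i,
        (Am x U i)ᵀ * Matrix.diagonal (fun m => ((Am x U i *ᵥ h) m) ^ 2) * (Am x U i))
      ≤ (3 / (N : ℝ)) * ∑ i, spec
        ((Am x U i)ᵀ * Matrix.diagonal (fun m => ((Am x U i *ᵥ h) m) ^ 2) * (Am x U i)) :=
        mul_le_mul_of_nonneg_left (spec_sum_le _ _) (by positivity)
    _ ≤ (3 / (N : ℝ)) * ∑ _i : Fin N, (16 * (n : ℝ) ^ 3) :=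
        mul_le_mul_of_nonneg_left (Finset.sum_le_sum fun i _ => hterm i) (by positivity)
    _ = 48 * (n : ℝ) ^ 3 := by
        rw [Finset.sum_const, Finset.card_univ, Fintype.card_fin, nsmul_eq_mul]
        field_simp
        ring

include hn hx hU hN in
lemma hess_lip {h h' : Fin n → ℝ} (hh : enorm2 h = 1) (hh' : enorm2 h' = 1) :
    spec (ehess (Lobj x U) h - ehess (Lobj x U) h') ≤
      96 * (n : ℝ) ^ 3 * enorm2 (h - h') := by
  have hNR : (0 : ℝ) < N := by exact_mod_cast hN
  have hsnn : (0 : ℝ) ≤ Real.sqrt n := Real.sqrt_nonneg n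
  set d := enorm2 (h - h') with hd
  have hdnn : 0 ≤ d := enorm2_nonneg _
  rw [ehess_Lobj, ehess_Lobj, ← smul_sub, ← Finset.sum_sub_distrib]
  have hdiff : ∀ i : Fin N,
      (Am x U i)ᵀ * Matrix.diagonal (fun m => ((Am x U i *ᵥ h) m) ^ 2) * (Am x U i) -
        (Am x U i)ᵀ * Matrix.diagonal (fun m => ((Am x U i *ᵥ h') m) ^ 2) * (Am x U i) =
      (Am x U i)ᵀ * Matrix.diagonal
        (fun m => ((Am x U i *ᵥ h) m) ^ 2 - ((Am x U i *ᵥ h') m) ^ 2) * (Am x U i) := by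
    intro i
    rw [← Matrix.diagonal_sub]
    rw [Matrix.mul_sub, Matrix.sub_mul]
  simp_rw [hdiff]
  rw [spec_smul]
  have habs : |(-(3 / (N : ℝ)))| = 3 / N := by
    rw [abs_neg, abs_of_nonneg (by positivity)]
  rw [habs]
  have hterm : ∀ i : Fin N,
      spec ((Am x U i)ᵀ * Matrix.diagonal
        (fun m => ((Am x U i *ᵥ h) m) ^ 2 - ((Am x U i *ᵥ h') m) ^ 2) * (Am x U i)) ≤
        32 * (n : ℝ) ^ 3 * d := by
    intro i
    have hD : spec (Matrix.diagonal
        (fun m => ((Am x U i *ᵥ h) m) ^ 2 - ((Am x U i *ᵥ h') m) ^ 2)) ≤ 8 * n * d := by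
      refine spec_diagonal_le (by positivity) fun m => ?_
      have hm : |(Am x U i *ᵥ h) m| ≤ 2 * Real.sqrt n := by
        have := abs_Am_mulVec_le hx hU i h m; rwa [hh, mul_one] at this
      have hm' : |(Am x U i *ᵥ h') m| ≤ 2 * Real.sqrt n := by
        have := abs_Am_mulVec_le hx hU i h' m; rwa [hh', mul_one] at this
      have hsq := sq_diff_abs (by positivity) hm hm'
      have hdm : |(Am x U i *ᵥ h) m - (Am x U i *ᵥ h') m| ≤ 2 * Real.sqrt n * d := by
        have h0 : (Am x U i *ᵥ h) m - (Am x U i *ᵥ h') m = (Am x U i *ᵥ (h - h')) m := by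
          rw [Matrix.mulVec_sub]; simp
        rw [h0]
        exact abs_Am_mulVec_le hx hU i (h - h') m
      have hs : Real.sqrt n * Real.sqrt n = (n : ℝ) := Real.mul_self_sqrt (Nat.cast_nonneg n)
      calc |(Am x U i *ᵥ h) m ^ 2 - (Am x U i *ᵥ h') m ^ 2|
          ≤ 2 * (2 * Real.sqrt n) * |(Am x U i *ᵥ h) m - (Am x U i *ᵥ h') m| := hsq
        _ ≤ 2 * (2 * Real.sqrt n) * (2 * Real.sqrt n * d) := by
            refine mul_le_mul_of_nonneg_left hdm (by positivity)
        _ = 8 * ((Real.sqrt n * Real.sqrt n)) * d := by ring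
        _ = 8 * n * d := by rw [hs]
    have hA := spec_Am_le hx hU i
    have hAnn := spec_nonneg (Am x U i)
    calc spec ((Am x U i)ᵀ * Matrix.diagonal
          (fun m => ((Am x U i *ᵥ h) m) ^ 2 - ((Am x U i *ᵥ h') m) ^ 2) * (Am x U i))
        ≤ spec ((Am x U i)ᵀ * Matrix.diagonal
            (fun m => ((Am x U i *ᵥ h) m) ^ 2 - ((Am x U i *ᵥ h') m) ^ 2)) * spec (Am x U i) :=
          spec_mul_le _ _
      _ ≤ (spec (Am x U i)ᵀ * spec (Matrix.diagonal
            (fun m => ((Am x U i *ᵥ h) m) ^ 2 - ((Am x U i *ᵥ h') m) ^ 2))) * spec (Am x U i) :=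
          mul_le_mul_of_nonneg_right (spec_mul_le _ _) hAnn
      _ ≤ ((2 * n) * (8 * n * d)) * (2 * n) := by
          rw [spec_transpose]
          refine mul_le_mul ?_ hA hAnn (by positivity)
          exact mul_le_mul hA hD (spec_nonneg _) (by positivity)
      _ = 32 * (n : ℝ) ^ 3 * d := by ring
  calc (3 / (N : ℝ)) * spec (∑ i, (Am x U i)ᵀ * Matrix.diagonal
        (fun m => ((Am x U i *ᵥ h) m) ^ 2 - ((Am x U i *ᵥ h') m) ^ 2) * (Am x U i))
      ≤ (3 / (N : ℝ)) * ∑ i, spec ((Am x U i)ᵀ * Matrix.diagonal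
        (fun m => ((Am x U i *ᵥ h) m) ^ 2 - ((Am x U i *ᵥ h') m) ^ 2) * (Am x U i)) :=
        mul_le_mul_of_nonneg_left (spec_sum_le _ _) (by positivity)
    _ ≤ (3 / (N : ℝ)) * ∑ _i : Fin N, (32 * (n : ℝ) ^ 3 * d) :=
        mul_le_mul_of_nonneg_left (Finset.sum_le_sum fun i _ => hterm i) (by positivity)
    _ = 96 * (n : ℝ) ^ 3 * d := by
        rw [Finset.sum_const, Finset.card_univ, Fintype.card_fin, nsmul_eq_mul]
        field_simp
        ring

include hn hx hU hN in
lemma rgrad_lip {h h' : Fin n → ℝ} (hh : enorm2 h = 1) (hh' : enorm2 h' = 1) :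
    enorm2 (rgrad (Lobj x U) h - rgrad (Lobj x U) h') ≤
      64 * (n : ℝ) ^ 3 * enorm2 (h - h') := by
  set d := enorm2 (h - h') with hd
  have hdnn : 0 ≤ d := enorm2_nonneg _
  have hn1 : (1 : ℝ) ≤ n := by exact_mod_cast hn
  set g := egrad (Lobj x U) h with hg
  set g' := egrad (Lobj x U) h' with hg'
  have hid : rgrad (Lobj x U) h - rgrad (Lobj x U) h' =
      Pperp h *ᵥ (g - g') + (Pperp h - Pperp h') *ᵥ g' := by
    rw [rgrad, rgrad, Matrix.mulVec_sub, Matrix.sub_mulVec]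
    abel
  have hP : spec (Pperp h) ≤ 1 := spec_Pperp_le hh
  have hPd : spec (Pperp h - Pperp h') ≤ d := by
    have hrw : Pperp h - Pperp h' = Matrix.vecMulVec h' h' - Matrix.vecMulVec h h := by
      rw [Pperp, Pperp]; abel
    rw [hrw]
    have := spec_vmv_sub hh' hh
    have hneg : enorm2 (h' - h) = d := by
      rw [hd]
      have : h' - h = (-1 : ℝ) • (h - h') := by ext j; simp
      rw [this, enorm2_smul]
      norm_num
    rwa [hneg] at this
  have h1 : enorm2 (Pperp h *ᵥ (g - g')) ≤ 48 * (n : ℝ) ^ 3 * d := by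
    calc enorm2 (Pperp h *ᵥ (g - g')) ≤ spec (Pperp h) * enorm2 (g - g') :=
          enorm2_mulVec_le _ _
      _ ≤ 1 * (48 * (n : ℝ) ^ 3 * d) :=
          mul_le_mul hP (grad_lip hn hx hU hN hh hh') (enorm2_nonneg _) zero_le_one
      _ = 48 * (n : ℝ) ^ 3 * d := by ring
  have h2 : enorm2 ((Pperp h - Pperp h') *ᵥ g') ≤ 16 * (n : ℝ) ^ 3 * d := by
    calc enorm2 ((Pperp h - Pperp h') *ᵥ g') ≤ spec (Pperp h - Pperp h') * enorm2 g' :=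
          enorm2_mulVec_le _ _
      _ ≤ d * (16 * (n : ℝ) ^ 3) :=
          mul_le_mul hPd (grad_bound hn hx hU hN hh') (enorm2_nonneg _) hdnn
      _ = 16 * (n : ℝ) ^ 3 * d := by ring
  calc enorm2 (rgrad (Lobj x U) h - rgrad (Lobj x U) h')
      = enorm2 (Pperp h *ᵥ (g - g') + (Pperp h - Pperp h') *ᵥ g') := by rw [hid]
    _ ≤ enorm2 (Pperp h *ᵥ (g - g')) + enorm2 ((Pperp h - Pperp h') *ᵥ g') := enorm2_add_le _ _
    _ ≤ 48 * (n : ℝ) ^ 3 * d + 16 * (n : ℝ) ^ 3 * d := add_le_add h1 h2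
    _ = 64 * (n : ℝ) ^ 3 * d := by ring

include hn hx hU hN in
lemma rhess_lip {h h' : Fin n → ℝ} (hh : enorm2 h = 1) (hh' : enorm2 h' = 1) :
    spec (rhess (Lobj x U) h - rhess (Lobj x U) h') ≤
      272 * (n : ℝ) ^ 3 * enorm2 (h - h') := by
  set d := enorm2 (h - h') with hd
  have hdnn : 0 ≤ d := enorm2_nonneg _
  have hn1 : (1 : ℝ) ≤ n := by exact_mod_cast hn
  have hn3 : (0:ℝ) ≤ (n : ℝ) ^ 3 := by positivity
  set g := egrad (Lobj x U) h with hg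
  set g' := egrad (Lobj x U) h' with hg'
  set H := ehess (Lobj x U) h with hH
  set H' := ehess (Lobj x U) h' with hH'
  set P := Pperp h with hPdef
  set P' := Pperp h' with hPdef'
  have hP : spec P ≤ 1 := spec_Pperp_le hh
  have hP' : spec P' ≤ 1 := spec_Pperp_le hh'
  have hPd : spec (P - P') ≤ d := by
    have hrw : P - P' = Matrix.vecMulVec h' h' - Matrix.vecMulVec h h := by
      rw [hPdef, hPdef', Pperp, Pperp]; abel
    rw [hrw]
    have := spec_vmv_sub hh' hh
    have hneg : enorm2 (h' - h) = d := by
      rw [hd]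
      have : h' - h = (-1 : ℝ) • (h - h') := by ext j; simp
      rw [this, enorm2_smul]
      norm_num
    rwa [hneg] at this
  have hHb : spec H ≤ 48 * (n : ℝ) ^ 3 := hess_bound hn hx hU hN hh
  have hHb' : spec H' ≤ 48 * (n : ℝ) ^ 3 := hess_bound hn hx hU hN hh'
  have hHd : spec (H - H') ≤ 96 * (n : ℝ) ^ 3 * d := hess_lip hn hx hU hN hh hh'
  have hGb' : enorm2 g' ≤ 16 * (n : ℝ) ^ 3 := grad_bound hn hx hU hN hh'
  have hGd : enorm2 (g - g') ≤ 48 * (n : ℝ) ^ 3 * d := grad_lip hn hx hU hN hh hh'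
  -- matrix part
  have hX : P * H * P - P' * H' * P' =
      (P - P') * H * P + P' * (H - H') * P + P' * H' * (P - P') := by
    noncomm_ring
  have hXb : spec (P * H * P - P' * H' * P') ≤ 192 * (n : ℝ) ^ 3 * d := by
    rw [hX]
    have t1 : spec ((P - P') * H * P) ≤ d * (48 * (n : ℝ) ^ 3) * 1 := by
      calc spec ((P - P') * H * P) ≤ spec ((P - P') * H) * spec P := spec_mul_le _ _
        _ ≤ (spec (P - P') * spec H) * spec P :=
            mul_le_mul_of_nonneg_right (spec_mul_le _ _) (spec_nonneg _)
        _ ≤ (d * (48 * (n : ℝ) ^ 3)) * 1 := by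
            refine mul_le_mul ?_ hP (spec_nonneg _) (by positivity)
            exact mul_le_mul hPd hHb (spec_nonneg _) hdnn
    have t2 : spec (P' * (H - H') * P) ≤ 1 * (96 * (n : ℝ) ^ 3 * d) * 1 := by
      calc spec (P' * (H - H') * P) ≤ spec (P' * (H - H')) * spec P := spec_mul_le _ _
        _ ≤ (spec P' * spec (H - H')) * spec P :=
            mul_le_mul_of_nonneg_right (spec_mul_le _ _) (spec_nonneg _)
        _ ≤ (1 * (96 * (n : ℝ) ^ 3 * d)) * 1 := by
            refine mul_le_mul ?_ hP (spec_nonneg _) (by positivity)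
            exact mul_le_mul hP' hHd (spec_nonneg _) zero_le_one
    have t3 : spec (P' * H' * (P - P')) ≤ 1 * (48 * (n : ℝ) ^ 3) * d := by
      calc spec (P' * H' * (P - P')) ≤ spec (P' * H') * spec (P - P') := spec_mul_le _ _
        _ ≤ (spec P' * spec H') * spec (P - P') :=
            mul_le_mul_of_nonneg_right (spec_mul_le _ _) (spec_nonneg _)
        _ ≤ (1 * (48 * (n : ℝ) ^ 3)) * d := by
            refine mul_le_mul ?_ hPd (spec_nonneg _) (by positivity)
            exact mul_le_mul hP' hHb' (spec_nonneg _) zero_le_one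
    calc spec ((P - P') * H * P + P' * (H - H') * P + P' * H' * (P - P'))
        ≤ spec ((P - P') * H * P + P' * (H - H') * P) + spec (P' * H' * (P - P')) := by
          rw [spec]
          rw [map_add]
          exact norm_add_le _ _
      _ ≤ (spec ((P - P') * H * P) + spec (P' * (H - H') * P)) + spec (P' * H' * (P - P')) := by
          have : spec ((P - P') * H * P + P' * (H - H') * P) ≤
              spec ((P - P') * H * P) + spec (P' * (H - H') * P) := by
            rw [spec, map_add]; exact norm_add_le _ _
          linarith
      _ ≤ (d * (48 * (n : ℝ) ^ 3) * 1 + 1 * (96 * (n : ℝ) ^ 3 * d) * 1) +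
            1 * (48 * (n : ℝ) ^ 3) * d := by linarith
      _ = 192 * (n : ℝ) ^ 3 * d := by ring
  -- scalar part
  have haa : |g ⬝ᵥ h - g' ⬝ᵥ h'| ≤ 64 * (n : ℝ) ^ 3 * d := by
    have hidd : g ⬝ᵥ h - g' ⬝ᵥ h' = (g - g') ⬝ᵥ h + g' ⬝ᵥ (h - h') := by
      simp only [sub_dotProduct, dotProduct_sub]; ring
    rw [hidd]
    calc |(g - g') ⬝ᵥ h + g' ⬝ᵥ (h - h')| ≤ |(g - g') ⬝ᵥ h| + |g' ⬝ᵥ (h - h')| := abs_add_le _ _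
      _ ≤ enorm2 (g - g') * enorm2 h + enorm2 g' * enorm2 (h - h') :=
          add_le_add (abs_dot_le _ _) (abs_dot_le _ _)
      _ ≤ (48 * (n : ℝ) ^ 3 * d) * 1 + (16 * (n : ℝ) ^ 3) * d := by
          rw [hh]
          exact add_le_add
            (mul_le_mul_of_nonneg_right hGd zero_le_one)
            (mul_le_mul hGb' le_rfl hdnn (by positivity))
      _ = 64 * (n : ℝ) ^ 3 * d := by ring
  have ha' : |g' ⬝ᵥ h'| ≤ 16 * (n : ℝ) ^ 3 := by
    calc |g' ⬝ᵥ h'| ≤ enorm2 g' * enorm2 h' := abs_dot_le _ _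
      _ ≤ (16 * (n : ℝ) ^ 3) * 1 := by
          rw [hh']
          exact mul_le_mul_of_nonneg_right hGb' zero_le_one
      _ = 16 * (n : ℝ) ^ 3 := by ring
  have hY : (g ⬝ᵥ h) • P - (g' ⬝ᵥ h') • P' =
      (g ⬝ᵥ h - g' ⬝ᵥ h') • P + (g' ⬝ᵥ h') • (P - P') := by
    rw [sub_smul, smul_sub]; abel
  have hYb : spec ((g ⬝ᵥ h) • P - (g' ⬝ᵥ h') • P') ≤ 80 * (n : ℝ) ^ 3 * d := by
    rw [hY]
    have t1 : spec ((g ⬝ᵥ h - g' ⬝ᵥ h') • P) ≤ (64 * (n : ℝ) ^ 3 * d) * 1 := by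
      rw [spec_smul]
      exact mul_le_mul haa hP (spec_nonneg _) (by positivity)
    have t2 : spec ((g' ⬝ᵥ h') • (P - P')) ≤ (16 * (n : ℝ) ^ 3) * d := by
      rw [spec_smul]
      exact mul_le_mul ha' hPd (spec_nonneg _) (by positivity)
    calc spec ((g ⬝ᵥ h - g' ⬝ᵥ h') • P + (g' ⬝ᵥ h') • (P - P'))
        ≤ spec ((g ⬝ᵥ h - g' ⬝ᵥ h') • P) + spec ((g' ⬝ᵥ h') • (P - P')) := by
          rw [spec, map_add]; exact norm_add_le _ _
      _ ≤ (64 * (n : ℝ) ^ 3 * d) * 1 + (16 * (n : ℝ) ^ 3) * d := add_le_add t1 t2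
      _ = 80 * (n : ℝ) ^ 3 * d := by ring
  have hsplit : rhess (Lobj x U) h - rhess (Lobj x U) h' =
      (P * H * P - P' * H' * P') - ((g ⬝ᵥ h) • P - (g' ⬝ᵥ h') • P') := by
    rw [rhess, rhess]
    abel
  calc spec (rhess (Lobj x U) h - rhess (Lobj x U) h')
      = spec ((P * H * P - P' * H' * P') - ((g ⬝ᵥ h) • P - (g' ⬝ᵥ h') • P')) := by rw [hsplit]
    _ ≤ spec (P * H * P - P' * H' * P') + spec ((g ⬝ᵥ h) • P - (g' ⬝ᵥ h') • P') :=
        spec_sub_le _ _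
    _ ≤ 192 * (n : ℝ) ^ 3 * d + 80 * (n : ℝ) ^ 3 * d := add_le_add hXb hYb
    _ = 272 * (n : ℝ) ^ 3 * d := by ring
end
end Bounds
end SAux

/-- Lemma 6: Lipschitz continuity of the Riemannian gradient and Hessian on the sphere. -/
theorem stmt9 {n N : ℕ} (hn : 0 < n) (hN : 0 < N)
    (x : Fin N → Fin n → ℝ) (hx : ∀ i j, x i j = -1 ∨ x i j = 0 ∨ x i j = 1)
    (U : Matrix (Fin n) (Fin n) ℝ) (hU : spec U ≤ 2)
    (h h' : Fin n → ℝ) (hh : h ∈ usph n) (hh' : h' ∈ usph n) :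
    enorm2 (rgrad (Lobj x U) h - rgrad (Lobj x U) h') ≤
        64 * (n : ℝ) ^ 3 * enorm2 (h - h') ∧
      spec (rhess (Lobj x U) h - rhess (Lobj x U) h') ≤
        272 * (n : ℝ) ^ 3 * enorm2 (h - h') := by
  haveI : NeZero n := ⟨hn.ne'⟩
  have hh1 : enorm2 h = 1 := hh
  have hh1' : enorm2 h' = 1 := hh'
  exact ⟨SAux.rgrad_lip hn hx hU hN hh1 hh1', SAux.rhess_lip hn hx hU hN hh1 hh1'⟩
end
end
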